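/- The map φ : N → End_F(V) defined by φ(n) = n^{−1} ∘ X ∘ n − X takes its values in 𝔬, is surjective onto 𝔬, and satisfies φ(n₁) = φ(n₂) if and only if n₂ ∘ n₁^{−1} ∈ N_X; consequently φ induces a bijection from the set of right cosets N_X\N onto 𝔬. -/

import Mathlib

/-!
Write `n = 1 + u` with `u ∈ 𝔫`. Then `n⁻¹ X n - X = n⁻¹ [X, u]`, and `[X, 𝔫] ⊆ 𝔬`, `𝔫 𝔬 ⊆ 𝔬`:
lowering the level `i` by one lowers the weight `p(i, j)` by `r - i + 1`, an amount that
decreases with `i`.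

For surjectivity, `n⁻¹ X n - X = Y` with `n = 1 + u` amounts to `[X, u] = Y + u Y`. With `S` the
shift raising the level, `L Z = -∑ₘ Xᵐ Z Sᵐ⁺¹` is a right inverse of `[X, ·]` on `𝔬` sending
`𝔬^{≥t}` into `𝔫^{≥t}`. So `u ↦ L (Y + u Y)` raises the filtration degree of differences by one,
and as `𝔫^{≥r²} = 0` its `r²`-th iterate starting from `0` is a solution.

The description of the fibres is formal: `n₁⁻¹ X n₁ = n₂⁻¹ X n₂` iff `n₂ n₁⁻¹` commutes with `X`.
-/

/-- Index type of the standard basis `e(i,j,k)`: triples `(i,j,k)` with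
`1 ≤ i ≤ j ≤ r`, `1 ≤ k ≤ d j`. -/
def RIdx (r : ℕ) (d : ℕ → ℕ) : Type :=
  {x : ℕ × ℕ × ℕ //
    1 ≤ x.1 ∧ x.1 ≤ x.2.1 ∧ x.2.1 ≤ r ∧ 1 ≤ x.2.2 ∧ x.2.2 ≤ d x.2.1}

/-- The weight `p(i,j) = (i−1)(2r−i+2)/2 + (r−j+1)`. -/
def pfun (r i j : ℕ) : ℤ :=
  ((i : ℤ) - 1) * (2 * (r : ℤ) - (i : ℤ) + 2) / 2 + ((r : ℤ) - (j : ℤ) + 1)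

/-- `𝔫^{≥t}`: endomorphisms all of whose nonzero blocks (matrix entries in the basis
`e`) occur for pairs with `p(i,j) − p(i',j') ≥ t`. -/
def nGE {F : Type*} [Field F] {V : Type*} [AddCommGroup V] [Module F V]
    (r : ℕ) (d : ℕ → ℕ) (e : Module.Basis (RIdx r d) F V) (t : ℤ) :
    Set (Module.End F V) :=
  {A | ∀ x y : RIdx r d, e.repr (A (e x)) y ≠ 0 →
    t ≤ pfun r x.val.1 x.val.2.1 - pfun r y.val.1 y.val.2.1}

/-- `𝔬^{≥t}`: endomorphisms all of whose nonzero blocks occur for pairs with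
`i > 1` and `p(i−1,j) − p(i',j') ≥ t`. -/
def oGE {F : Type*} [Field F] {V : Type*} [AddCommGroup V] [Module F V]
    (r : ℕ) (d : ℕ → ℕ) (e : Module.Basis (RIdx r d) F V) (t : ℤ) :
    Set (Module.End F V) :=
  {A | ∀ x y : RIdx r d, e.repr (A (e x)) y ≠ 0 →
    1 < x.val.1 ∧
      t ≤ pfun r (x.val.1 - 1) x.val.2.1 - pfun r y.val.1 y.val.2.1}

/-- The group `N = {id + u : u ∈ 𝔫}`, realized as the set of units of `End_F(V)`
whose value is of the form `1 + u` with `u ∈ 𝔫 = 𝔫^{≥1}`. -/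
def Nset {F : Type*} [Field F] {V : Type*} [AddCommGroup V] [Module F V]
    (r : ℕ) (d : ℕ → ℕ) (e : Module.Basis (RIdx r d) F V) :
    Set (Module.End F V)ˣ :=
  {n | ∃ u ∈ nGE r d e 1, (n : Module.End F V) = 1 + u}

open Finset Function

namespace Module.Basis

variable {ι R M : Type*} [CommRing R] [AddCommGroup M] [Module R M] (b : Basis ι R M)

def supportedEnd (P : ι → ι → Prop) : Submodule R (Module.End R M) where
  carrier := {A | ∀ x y, b.repr (A (b x)) y ≠ 0 → P x y}
  zero_mem' x y h := by simp at h
  add_mem' {A B} hA hB x y h := by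
    by_contra hP
    simp only [LinearMap.add_apply, map_add, Finsupp.add_apply] at h
    rw [not_not.mp (mt (hA x y) hP), not_not.mp (mt (hB x y) hP), add_zero] at h
    exact h rfl
  smul_mem' c A hA x y h := hA x y fun h0 => h (by simp [h0])

variable {b}

lemma supportedEnd_mono {P Q : ι → ι → Prop} (h : ∀ x y, P x y → Q x y) :
    b.supportedEnd P ≤ b.supportedEnd Q :=
  fun _ hA x y hxy => h x y (hA x y hxy)

lemma one_mem_supportedEnd : (1 : Module.End R M) ∈ b.supportedEnd fun x y => y = x := by
  classical
  intro x y h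
  by_contra hyx
  simp [Ne.symm hyx] at h

lemma mul_mem_supportedEnd {P Q : ι → ι → Prop} {A B : Module.End R M}
    (hA : A ∈ b.supportedEnd P) (hB : B ∈ b.supportedEnd Q) :
    A * B ∈ b.supportedEnd fun x y => ∃ z, Q x z ∧ P z y := by
  intro x y h
  have hsum : b.repr ((A * B) (b x)) y
      = (b.repr (B (b x))).sum fun z c => c * b.repr (A (b z)) y := by
    conv_lhs => rw [Module.End.mul_apply, ← b.linearCombination_repr (B (b x))]
    simp [Finsupp.linearCombination_apply, Finsupp.sum, Finsupp.finsetSum_apply]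
  rw [hsum] at h
  obtain ⟨z, -, hz⟩ := Finset.exists_ne_zero_of_sum_ne_zero h
  exact ⟨z, hB x z (left_ne_zero_of_mul hz), hA z y (right_ne_zero_of_mul hz)⟩

lemma apply_eq_zero_of_mem_supportedEnd {P : ι → ι → Prop} {A : Module.End R M}
    (hA : A ∈ b.supportedEnd P) {x : ι} (hx : ∀ y, ¬ P x y) : A (b x) = 0 :=
  b.repr.injective <| Finsupp.ext fun y => by
    simpa using not_not.mp (mt (hA x y) (hx y))

lemma eq_zero_of_mem_supportedEnd {P : ι → ι → Prop} {A : Module.End R M}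
    (hA : A ∈ b.supportedEnd P) (hP : ∀ x y, ¬ P x y) : A = 0 :=
  b.ext fun x => apply_eq_zero_of_mem_supportedEnd hA (hP x)

lemma pow_mem_supportedEnd_of_shift {κ : Type*} {ℓ : ι → ℤ} {c : ι → κ} {a : ℤ}
    {A : Module.End R M} (hA : A ∈ b.supportedEnd fun x y => ℓ y = ℓ x + a ∧ c y = c x)
    (m : ℕ) : A ^ m ∈ b.supportedEnd fun x y => ℓ y = ℓ x + m * a ∧ c y = c x := by
  induction m with
  | zero => exact supportedEnd_mono (by rintro x y rfl; simp) one_mem_supportedEnd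
  | succ m ih =>
    rw [pow_succ]
    refine supportedEnd_mono ?_ (mul_mem_supportedEnd ih hA)
    rintro x y ⟨z, ⟨hz, hcz⟩, hy, hcy⟩
    exact ⟨by rw [hy, hz]; push_cast; ring, hcy.trans hcz⟩

end Module.Basis

lemma Function.isFixedPt_iterate_of_sub_mem {M : Type*} [AddGroup M] {f : M → M}
    {s : ℕ → Set M} (hf : ∀ n a b, a - b ∈ s n → f a - f b ∈ s (n + 1)) {x : M}
    (hx : f x - x ∈ s 0) {K : ℕ} (hK : ∀ a ∈ s K, a = 0) : IsFixedPt f (f^[K] x) := by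
  have step : ∀ n, f^[n + 1] x - f^[n] x ∈ s n := by
    intro n
    induction n with
    | zero => simpa using hx
    | succ n ih =>
      have h := hf n _ _ ih
      rwa [← iterate_succ_apply' f, ← iterate_succ_apply' f] at h
  have := hK _ (step K)
  rwa [sub_eq_zero, iterate_succ_apply'] at this

lemma commutator_neg_sum_eq {A : Type*} [Ring A] (X Z S : A) (n : ℕ) :
    X * -(∑ m ∈ range n, X ^ m * Z * S ^ (m + 1))
        - -(∑ m ∈ range n, X ^ m * Z * S ^ (m + 1)) * X
      = Z - X ^ n * Z * S ^ n - ∑ m ∈ range n, X ^ m * Z * S ^ m * (1 - S * X) := by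
  induction n with
  | zero => simp
  | succ n ih =>
    rw [sum_range_succ, sum_range_succ, pow_succ' X n, pow_succ S n]
    generalize ∑ m ∈ range n, X ^ m * Z * S ^ (m + 1) = T at ih ⊢
    generalize ∑ m ∈ range n, X ^ m * Z * S ^ m * (1 - S * X) = U at ih ⊢
    rw [← sub_eq_zero] at ih ⊢
    rw [← ih]
    noncomm_ring

lemma Units.inv_mul_mul_sub_eq_of_mul_eq {A : Type*} [Ring A] (n : Aˣ) {X Y : A}
    (h : X * n = n * (Y + X)) : ↑n⁻¹ * X * n - X = Y := by
  rw [mul_assoc, h, ← mul_assoc, Units.inv_mul, one_mul, add_sub_cancel_right]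

lemma Units.conj_eq_conj_iff {A : Type*} [Monoid A] (a b : Aˣ) (X : A) :
    ↑a⁻¹ * X * a = ↑b⁻¹ * X * b ↔ ↑(b * a⁻¹) * X = X * ↑(b * a⁻¹) := by
  rw [← Units.mul_right_inj b, ← Units.mul_left_inj a⁻¹]
  simp only [Units.val_mul, mul_assoc, Units.mul_inv, mul_one, Units.mul_inv_cancel_left]

lemma two_mul_pfun (r i j : ℕ) :
    2 * pfun r i j = ((i : ℤ) - 1) * (2 * r - i + 2) + 2 * (r - j + 1) := by
  obtain ⟨k, hk⟩ : Even (((i : ℤ) - 1) * (2 * r - i + 2)) := by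
    have : ((i : ℤ) - 1) * (2 * r - i + 2) = 2 * (r * (i - 1)) - (i - 2) * (i - 2 + 1) := by
      ring
    rw [this]
    exact (even_two_mul _).sub (Int.even_mul_succ_self _)
  unfold pfun
  rw [hk]
  omega

lemma le_of_pfun_lt {r i j i' j' : ℕ} (hij : i ≤ j) (hi'j' : i' ≤ j') (hj' : j' ≤ r)
    (h : pfun r i' j' < pfun r i j) : i' ≤ i := by
  by_contra! hlt
  have h₁ := two_mul_pfun r i j
  have h₂ := two_mul_pfun r i' j'
  have : (i : ℤ) + 1 ≤ i' := by exact_mod_cast hlt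
  have : (i' : ℤ) ≤ r := by exact_mod_cast hi'j'.trans hj'
  have : (i : ℤ) ≤ j := by exact_mod_cast hij
  have : (j' : ℤ) ≤ r := by exact_mod_cast hj'
  nlinarith

-- `2 (p(i + m, j) - p(i, j)) = m (2r + 3 - 2i - m)`, independent of `j` and decreasing in `i`.
lemma pfun_add_sub_pfun_le (r m j j' : ℕ) {i i' : ℕ} (h : i ≤ i') :
    pfun r (i' + m) j' - pfun r i' j' ≤ pfun r (i + m) j - pfun r i j := by
  have := two_mul_pfun r (i' + m) j'
  have := two_mul_pfun r i' j'
  have := two_mul_pfun r (i + m) j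
  have := two_mul_pfun r i j
  have : (0 : ℤ) ≤ m * (i' - i) := mul_nonneg (by positivity) (by simpa using h)
  push_cast at *
  nlinarith

lemma one_le_pfun {r i j : ℕ} (hi : 1 ≤ i) (hij : i ≤ j) (hj : j ≤ r) : 1 ≤ pfun r i j := by
  have := two_mul_pfun r i j
  have : (1 : ℤ) ≤ i := by exact_mod_cast hi
  have : (i : ℤ) ≤ j := by exact_mod_cast hij
  have : (j : ℤ) ≤ r := by exact_mod_cast hj
  nlinarith

lemma pfun_le_sq {r i j : ℕ} (hi : 1 ≤ i) (hij : i ≤ j) (hj : j ≤ r) :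
    pfun r i j ≤ (r : ℤ) ^ 2 := by
  have := two_mul_pfun r i j
  have : (1 : ℤ) ≤ i := by exact_mod_cast hi
  have : (i : ℤ) ≤ j := by exact_mod_cast hij
  have : (j : ℤ) ≤ r := by exact_mod_cast hj
  nlinarith

open Module.Basis

section

variable {r : ℕ} {d : ℕ → ℕ} {F : Type*} [Field F] {V : Type*} [AddCommGroup V] [Module F V]
  {e : Module.Basis (RIdx r d) F V} {X : Module.End F V}

lemma nGE_mono {s t : ℤ} (h : s ≤ t) : nGE r d e t ⊆ nGE r d e s :=
  supportedEnd_mono fun _ _ hxy => h.trans hxy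

lemma oGE_mono {s t : ℤ} (h : s ≤ t) : oGE r d e t ⊆ oGE r d e s :=
  supportedEnd_mono fun _ _ hxy => ⟨hxy.1, h.trans hxy.2⟩

lemma nGE_mul {A B : Module.End F V} {s t : ℤ} (hA : A ∈ nGE r d e s) (hB : B ∈ nGE r d e t) :
    A * B ∈ nGE r d e (s + t) :=
  supportedEnd_mono (fun _ _ ⟨_, hxz, hzy⟩ => by omega) (mul_mem_supportedEnd hA hB)

lemma nGE_mul_oGE {A B : Module.End F V} {s t : ℤ} (hA : A ∈ nGE r d e s)
    (hB : B ∈ oGE r d e t) : A * B ∈ oGE r d e (s + t) :=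
  supportedEnd_mono (fun _ _ ⟨_, hxz, hzy⟩ => ⟨hxz.1, by omega⟩) (mul_mem_supportedEnd hA hB)

lemma eq_zero_of_mem_nGE {A : Module.End F V} {t : ℤ} (hA : A ∈ nGE r d e t)
    (ht : (r : ℤ) ^ 2 ≤ t) : A = 0 :=
  eq_zero_of_mem_supportedEnd hA fun x y hxy => by
    have := one_le_pfun y.prop.1 y.prop.2.1 y.prop.2.2.1
    have := pfun_le_sq x.prop.1 x.prop.2.1 x.prop.2.2.1
    linarith

lemma pow_mem_nGE {u : Module.End F V} (hu : u ∈ nGE r d e 1) (k : ℕ) :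
    u ^ k ∈ nGE r d e k := by
  induction k with
  | zero => exact supportedEnd_mono (by rintro x y rfl; simp) one_mem_supportedEnd
  | succ k ih => simpa [pow_succ] using nGE_mul ih hu

lemma pow_eq_zero_of_mem_nGE {u : Module.End F V} (hu : u ∈ nGE r d e 1) : u ^ (r ^ 2) = 0 :=
  eq_zero_of_mem_nGE (pow_mem_nGE hu _) (by push_cast; rfl)

lemma Nset_mul {n₁ n₂ : (Module.End F V)ˣ} (h₁ : n₁ ∈ Nset r d e) (h₂ : n₂ ∈ Nset r d e) :
    n₁ * n₂ ∈ Nset r d e := by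
  obtain ⟨u₁, hu₁, h₁⟩ := h₁
  obtain ⟨u₂, hu₂, h₂⟩ := h₂
  refine ⟨u₁ + u₂ + u₁ * u₂, ?_, by rw [Units.val_mul, h₁, h₂]; noncomm_ring⟩
  exact (e.supportedEnd _).add_mem ((e.supportedEnd _).add_mem hu₁ hu₂)
    (nGE_mono (by norm_num) (nGE_mul hu₁ hu₂))

lemma Nset_inv {n : (Module.End F V)ˣ} (h : n ∈ Nset r d e) : n⁻¹ ∈ Nset r d e := by
  obtain ⟨u, hu, hn⟩ := h
  have hneg : -u ∈ nGE r d e 1 := (e.supportedEnd _).neg_mem hu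
  have hinv : ↑n⁻¹ = ∑ i ∈ range (r ^ 2 + 1), (-u) ^ i := by
    refine Units.inv_eq_of_mul_eq_one_left ?_
    rw [hn, ← sub_neg_eq_add, geom_sum_mul_neg, pow_succ, pow_eq_zero_of_mem_nGE hneg, zero_mul,
      sub_zero]
  refine ⟨∑ i ∈ range (r ^ 2), (-u) ^ (i + 1), (e.supportedEnd _).sum_mem fun i _ => ?_, ?_⟩
  · exact nGE_mono (by push_cast; omega) (pow_mem_nGE hneg (i + 1))
  · rw [hinv, sum_range_succ', pow_zero, add_comm]

def RIdx.down (x : RIdx r d) (h : 1 < x.val.1) : RIdx r d :=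
  ⟨(x.val.1 - 1, x.val.2), by omega, (Nat.sub_le _ _).trans x.prop.2.1, x.prop.2.2⟩

def RIdx.up (x : RIdx r d) (h : x.val.1 < x.val.2.1) : RIdx r d :=
  ⟨(x.val.1 + 1, x.val.2), by omega, h, x.prop.2.2⟩

lemma RIdx.up_down (x : RIdx r d) (h : 1 < x.val.1) (h' : (x.down h).val.1 < (x.down h).val.2.1) :
    (x.down h).up h' = x :=
  Subtype.ext (Prod.ext (by simp [RIdx.down, RIdx.up]; omega) rfl)

def levelShift (a : ℤ) (x y : RIdx r d) : Prop :=
  (y.val.1 : ℤ) = x.val.1 + a ∧ y.val.2 = x.val.2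

lemma pow_mem_levelShift {A : Module.End F V} {a : ℤ} (hA : A ∈ e.supportedEnd (levelShift a))
    (m : ℕ) : A ^ m ∈ e.supportedEnd (levelShift (m * a)) :=
  pow_mem_supportedEnd_of_shift hA m

lemma X_mem_levelShift (hX0 : ∀ x : RIdx r d, x.val.1 = 1 → X (e x) = 0)
    (hXs : ∀ x y : RIdx r d, x.val.1 = y.val.1 + 1 → x.val.2 = y.val.2 → X (e x) = e y) :
    X ∈ e.supportedEnd (levelShift (-1)) := by
  intro x y hxy
  obtain hx | hx := eq_or_lt_of_le x.prop.1
  · rw [hX0 x hx.symm] at hxy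
    simp at hxy
  · rw [hXs x (x.down hx) (by simp [RIdx.down]; omega) rfl, e.repr_self,
      Finsupp.single_apply_ne_zero] at hxy
    obtain ⟨rfl, -⟩ := hxy
    exact ⟨by simp [RIdx.down]; omega, rfl⟩

lemma X_pow_eq_zero (hX : X ∈ e.supportedEnd (levelShift (-1))) : X ^ (r + 1) = 0 :=
  eq_zero_of_mem_supportedEnd (pow_mem_levelShift hX _) fun x y hxy => by
    have := hxy.1
    have := x.prop.2.1
    have := x.prop.2.2.1
    have := y.prop.1
    push_cast at *
    omega

lemma level_lt_of_oGE_rel {x y : RIdx r d} {t : ℤ} (ht : 1 ≤ t)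
    (h : 1 < x.val.1 ∧ t ≤ pfun r (x.val.1 - 1) x.val.2.1 - pfun r y.val.1 y.val.2.1) :
    y.val.1 < x.val.1 := by
  have := le_of_pfun_lt (r := r) (i := x.val.1 - 1) (j := x.val.2.1) (by have := x.prop.2.1; omega)
    y.prop.2.1 y.prop.2.2.1 (by omega)
  omega

lemma commutator_mem_oGE (hX : X ∈ e.supportedEnd (levelShift (-1))) {u : Module.End F V}
    (hu : u ∈ nGE r d e 1) : X * u - u * X ∈ oGE r d e 1 := by
  refine (e.supportedEnd _).sub_mem ?_ ?_
  · refine supportedEnd_mono ?_ (mul_mem_supportedEnd hX hu)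
    rintro x y ⟨z, hxz, hzy, hzy'⟩
    have hzx := le_of_pfun_lt x.prop.2.1 z.prop.2.1 z.prop.2.2.1 (by omega)
    have hy := y.prop.1
    obtain ⟨a, ha⟩ : ∃ a, x.val.1 = a + 1 := ⟨x.val.1 - 1, by omega⟩
    have hzy1 : z.val.1 = y.val.1 + 1 := by omega
    have := pfun_add_sub_pfun_le r 1 y.val.2.1 x.val.2.1 (i := y.val.1) (i' := a) (by omega)
    rw [← ha, ← hzy1, hzy'] at this
    refine ⟨by omega, ?_⟩
    rw [ha, Nat.add_sub_cancel, hzy']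
    linarith
  · refine supportedEnd_mono ?_ (mul_mem_supportedEnd hu hX)
    rintro x y ⟨z, ⟨hxz, hxz'⟩, hzy⟩
    have := z.prop.1
    have hz : z.val.1 = x.val.1 - 1 := by omega
    refine ⟨by omega, ?_⟩
    rw [← hz, ← hxz']
    exact hzy

variable (e) in
noncomputable def shiftUp : Module.End F V :=
  e.constr F fun x => if h : x.val.1 < x.val.2.1 then e (x.up h) else 0

lemma shiftUp_mem_levelShift : shiftUp e ∈ e.supportedEnd (levelShift 1) := by
  intro x y hxy
  rw [shiftUp, e.constr_basis] at hxy
  split_ifs at hxy with h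
  · rw [e.repr_self, Finsupp.single_apply_ne_zero] at hxy
    obtain ⟨rfl, -⟩ := hxy
    exact ⟨by simp [RIdx.up], rfl⟩
  · simp at hxy

lemma shiftUp_X_apply
    (hXs : ∀ x y : RIdx r d, x.val.1 = y.val.1 + 1 → x.val.2 = y.val.2 → X (e x) = e y)
    {z : RIdx r d} (hz : 1 < z.val.1) : shiftUp e (X (e z)) = e z := by
  have h : (z.down hz).val.1 < (z.down hz).val.2.1 := by
    have := z.prop.2.1
    simp [RIdx.down]
    omega
  rw [hXs z (z.down hz) (by simp [RIdx.down]; omega) rfl, shiftUp, e.constr_basis, dif_pos h,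
    RIdx.up_down]

variable (e X) in
noncomputable def adRightInv (Z : Module.End F V) : Module.End F V :=
  -∑ m ∈ range (r + 1), X ^ m * Z * shiftUp e ^ (m + 1)

lemma adRightInv_sub (Z₁ Z₂ : Module.End F V) :
    adRightInv e X Z₁ - adRightInv e X Z₂ = adRightInv e X (Z₁ - Z₂) := by
  simp only [adRightInv, mul_sub, sub_mul, sum_sub_distrib]
  abel

lemma adRightInv_mem (hX : X ∈ e.supportedEnd (levelShift (-1))) {Z : Module.End F V} {t : ℤ}
    (ht : 1 ≤ t) (hZ : Z ∈ oGE r d e t) : adRightInv e X Z ∈ nGE r d e t := by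
  refine (e.supportedEnd _).neg_mem ((e.supportedEnd _).sum_mem fun m _ => ?_)
  refine supportedEnd_mono ?_ (mul_mem_supportedEnd
    (mul_mem_supportedEnd (pow_mem_levelShift hX m) hZ)
    (pow_mem_levelShift shiftUp_mem_levelShift (m + 1)))
  rintro x y ⟨w, ⟨hxw, hxw'⟩, v, hwv, hvy, hvy'⟩
  have hvw := level_lt_of_oGE_rel ht hwv
  have hv : v.val.1 = y.val.1 + m := by omega
  have hw : w.val.1 - 1 = x.val.1 + m := by push_cast at hxw; omega
  have := pfun_add_sub_pfun_le r m y.val.2.1 x.val.2.1 (i := y.val.1) (i' := x.val.1) (by omega)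
  have h := hwv.2
  rw [hw, hxw', hv, ← hvy'] at h
  linarith

-- `1 - S X` is the projection onto level one, and `Xᵐ Z Sᵐ` vanishes there for `Z ∈ 𝔬`.
lemma commutator_adRightInv (hX : X ∈ e.supportedEnd (levelShift (-1)))
    (hXs : ∀ x y : RIdx r d, x.val.1 = y.val.1 + 1 → x.val.2 = y.val.2 → X (e x) = e y)
    {Z : Module.End F V} (hZ : Z ∈ oGE r d e 1) :
    X * adRightInv e X Z - adRightInv e X Z * X = Z := by
  rw [adRightInv, commutator_neg_sum_eq, X_pow_eq_zero hX, zero_mul, zero_mul, sub_zero,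
    sub_eq_self]
  refine sum_eq_zero fun m _ => e.ext fun z => ?_
  obtain hz | hz := eq_or_lt_of_le z.prop.1
  · have hXz : X (e z) = 0 := apply_eq_zero_of_mem_supportedEnd hX fun y hy => by
      have := y.prop.1
      have := hy.1
      omega
    have : (X ^ m * Z * shiftUp e ^ m) (e z) = 0 := apply_eq_zero_of_mem_supportedEnd
      (mul_mem_supportedEnd (mul_mem_supportedEnd (pow_mem_levelShift hX m) hZ)
        (pow_mem_levelShift shiftUp_mem_levelShift m))
      fun y ⟨w, ⟨hzw, _⟩, v, hwv, hvy, _⟩ => by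
        have := level_lt_of_oGE_rel le_rfl hwv
        have := y.prop.1
        omega
    simpa [hXz] using this
  · simp [shiftUp_X_apply hXs hz]

lemma conj_sub_mem_oGE (hX : X ∈ e.supportedEnd (levelShift (-1))) {n : (Module.End F V)ˣ}
    (hn : n ∈ Nset r d e) : ↑n⁻¹ * X * ↑n - X ∈ oGE r d e 1 := by
  obtain ⟨v, hv, hnv⟩ := Nset_inv hn
  obtain ⟨u, hu, hnu⟩ := hn
  have hc := commutator_mem_oGE hX hu
  have : ↑n⁻¹ * X * ↑n - X = (X * u - u * X) + v * (X * u - u * X) := by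
    calc ↑n⁻¹ * X * ↑n - X = ↑n⁻¹ * (X * n - n * X) := by
          rw [mul_sub, ← mul_assoc, ← mul_assoc, Units.inv_mul, one_mul]
      _ = _ := by rw [hnu, hnv]; noncomm_ring
  rw [this]
  exact (e.supportedEnd _).add_mem hc (oGE_mono (by norm_num) (nGE_mul_oGE hv hc))

lemma exists_conj_sub_eq (hX : X ∈ e.supportedEnd (levelShift (-1)))
    (hXs : ∀ x y : RIdx r d, x.val.1 = y.val.1 + 1 → x.val.2 = y.val.2 → X (e x) = e y)
    {Y : Module.End F V} (hY : Y ∈ oGE r d e 1) :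
    ∃ n ∈ Nset r d e, ↑n⁻¹ * X * ↑n - X = Y := by
  set f : Module.End F V → Module.End F V := fun w => adRightInv e X (Y + w * Y)
  have hYw : ∀ w ∈ nGE r d e 1, Y + w * Y ∈ oGE r d e 1 := fun w hw =>
    (e.supportedEnd _).add_mem hY (oGE_mono (by norm_num) (nGE_mul_oGE hw hY))
  have hf : Set.MapsTo f (nGE r d e 1) (nGE r d e 1) := fun w hw =>
    adRightInv_mem hX le_rfl (hYw w hw)
  have hfix : IsFixedPt f (f^[r ^ 2] 0) := by
    refine isFixedPt_iterate_of_sub_mem (s := fun k => nGE r d e (k + 1)) (fun k a b hab => ?_) ?_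
      fun a ha => eq_zero_of_mem_nGE ha (by push_cast; linarith)
    · simp only [f, adRightInv_sub, add_sub_add_left_eq_sub, ← sub_mul, Nat.cast_succ]
      exact adRightInv_mem hX (by omega) (nGE_mul_oGE hab hY)
    · simpa [f] using adRightInv_mem hX le_rfl hY
  set u := f^[r ^ 2] 0
  have hu : u ∈ nGE r d e 1 := hf.iterate _ ((e.supportedEnd _).zero_mem)
  have hcomm : X * u - u * X = Y + u * Y := by
    calc X * u - u * X = X * f u - f u * X := by rw [hfix.eq]
      _ = Y + u * Y := commutator_adRightInv hX hXs (hYw u hu)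
  have hunit : IsUnit (1 + u) := IsNilpotent.isUnit_one_add ⟨_, pow_eq_zero_of_mem_nGE hu⟩
  refine ⟨hunit.unit, ⟨u, hu, hunit.unit_spec⟩, Units.inv_mul_mul_sub_eq_of_mul_eq _ ?_⟩
  rw [hunit.unit_spec]
  calc X * (1 + u) = X + u * X + (X * u - u * X) := by noncomm_ring
    _ = (1 + u) * (Y + X) := by rw [hcomm]; noncomm_ring

end

theorem stmt_14_general (r : ℕ) (d : ℕ → ℕ)
    (F : Type*) [Field F] (V : Type*) [AddCommGroup V] [Module F V]
    (e : Module.Basis (RIdx r d) F V) (X : Module.End F V)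
    (hX0 : ∀ x : RIdx r d, x.val.1 = 1 → X (e x) = 0)
    (hXs : ∀ x y : RIdx r d, x.val.1 = y.val.1 + 1 → x.val.2 = y.val.2 →
      X (e x) = e y) :
    (∀ n ∈ Nset r d e,
      ((n⁻¹ : (Module.End F V)ˣ) : Module.End F V) * X * (n : Module.End F V) - X
        ∈ oGE r d e 1) ∧
    (∀ Y ∈ oGE r d e 1, ∃ n ∈ Nset r d e,
      ((n⁻¹ : (Module.End F V)ˣ) : Module.End F V) * X * (n : Module.End F V) - X
        = Y) ∧
    (∀ n₁ ∈ Nset r d e, ∀ n₂ ∈ Nset r d e,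
      (((n₁⁻¹ : (Module.End F V)ˣ) : Module.End F V) * X * (n₁ : Module.End F V) - X
          = ((n₂⁻¹ : (Module.End F V)ˣ) : Module.End F V) * X * (n₂ : Module.End F V) - X
        ↔ (n₂ * n₁⁻¹ ∈ Nset r d e ∧
            ((n₂ * n₁⁻¹ : (Module.End F V)ˣ) : Module.End F V) * X =
              X * ((n₂ * n₁⁻¹ : (Module.End F V)ˣ) : Module.End F V)))) := by
  have hX := X_mem_levelShift hX0 hXs
  refine ⟨fun n hn => conj_sub_mem_oGE hX hn, fun Y hY => exists_conj_sub_eq hX hXs hY,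
    fun n₁ hn₁ n₂ hn₂ => ?_⟩
  rw [sub_left_inj, Units.conj_eq_conj_iff]
  exact ⟨fun h => ⟨Nset_mul hn₂ (Nset_inv hn₁), h⟩, And.right⟩

/-- the map `φ(n) = n⁻¹ ∘ X ∘ n − X` on `N` takes values in `𝔬`, is
surjective onto `𝔬`, and `φ(n₁) = φ(n₂)` iff `n₂ ∘ n₁⁻¹ ∈ N_X` (i.e. `n₂ n₁⁻¹ ∈ N`
and commutes with `X`); hence it induces a bijection `N_X\N ≃ 𝔬`. -/
theorem stmt_14 (r : ℕ) (hr : 1 ≤ r) (d : ℕ → ℕ) (hd : 1 ≤ d r)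
    (F : Type*) [Field F] [CharZero F] (V : Type*) [AddCommGroup V] [Module F V]
    (e : Module.Basis (RIdx r d) F V) (X : Module.End F V)
    (hX0 : ∀ x : RIdx r d, x.val.1 = 1 → X (e x) = 0)
    (hXs : ∀ x y : RIdx r d, x.val.1 = y.val.1 + 1 → x.val.2 = y.val.2 →
      X (e x) = e y) :
    (∀ n ∈ Nset r d e,
      ((n⁻¹ : (Module.End F V)ˣ) : Module.End F V) * X * (n : Module.End F V) - X
        ∈ oGE r d e 1) ∧
    (∀ Y ∈ oGE r d e 1, ∃ n ∈ Nset r d e,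
      ((n⁻¹ : (Module.End F V)ˣ) : Module.End F V) * X * (n : Module.End F V) - X
        = Y) ∧
    (∀ n₁ ∈ Nset r d e, ∀ n₂ ∈ Nset r d e,
      (((n₁⁻¹ : (Module.End F V)ˣ) : Module.End F V) * X * (n₁ : Module.End F V) - X
          = ((n₂⁻¹ : (Module.End F V)ˣ) : Module.End F V) * X * (n₂ : Module.End F V) - X
        ↔ (n₂ * n₁⁻¹ ∈ Nset r d e ∧
            ((n₂ * n₁⁻¹ : (Module.End F V)ˣ) : Module.End F V) * X =
              X * ((n₂ * n₁⁻¹ : (Module.End F V)ˣ) : Module.End F V)))) :=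
  stmt_14_general r d F V e X hX0 hXs
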